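/- If {κ_j}_{j∈ℕ} is a bounded sequence of positive reals and {c_j}_{j∈ℕ} are positive reals with ∑_j c_j²/κ_j < ∞, then for each fixed (t,x) ∈ ℝ², the infinite matrix C_∞(t,x) with entries C_{jℓ} = (c_j c_ℓ/(κ_j+κ_ℓ)) exp(4(κ_j³+κ_ℓ³)t − (κ_j+κ_ℓ)x) defines a trace class operator on ℓ²(ℕ). -/

import Mathlib

open scoped RealInnerProductSpace

noncomputable section

/-- ℓ²(ℕ) over the reals. -/
abbrev H2 : Type := lp (fun _ : ℕ => ℝ) 2

/-- A bounded operator on ℓ² is trace class iff it admits a nuclear representation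
`T f = ∑' n, ⟪u n, f⟫ • v n` with `∑ ‖u n‖ ‖v n‖ < ∞`. -/
def IsTraceClass (T : H2 →L[ℝ] H2) : Prop :=
  ∃ u v : ℕ → H2, Summable (fun n => ‖u n‖ * ‖v n‖) ∧
    ∀ f : H2, T f = ∑' n, ⟪u n, f⟫ • v n

/-- The matrix entries of `C_∞(t,x)`. -/
def solitonEntry (κ c : ℕ → ℝ) (t x : ℝ) (j l : ℕ) : ℝ :=
  c j * c l / (κ j + κ l) * Real.exp (4 * ((κ j) ^ 3 + (κ l) ^ 3) * t - (κ j + κ l) * x)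

/-!
Write `b j = c j * exp (4 κ_j³ t - κ_j x)`, so that `C_{jl} = b_j b_l / (κ_j + κ_l)`. With the Cayley
transform `r(κ) = (κ - 1)/(κ + 1) ∈ (-1, 1)` one has `1 - r(p) r(q) = 2 (p + q)/((p + 1)(q + 1))`,
so a geometric series gives `1/(p + q) = ∑ₙ φₙ(p) φₙ(q)` with `φₙ(κ) = √2 r(κ)ⁿ/(κ + 1)` (the
coefficients of `e^{-κ s}` in the Laguerre basis of `L²(0, ∞)`). Hence `C_∞ = ∑ₙ ⟪wₙ, ·⟫ wₙ` with
`wₙ j = b_j φₙ(κ_j)`, and this nuclear representation has `∑ₙ ‖wₙ‖² = ∑_j b_j²/(2κ_j)`, which is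
finite because the bounded `κ` keeps the exponential weights in `b` bounded.
-/

section RankOneSum

variable {E : Type*} [NormedAddCommGroup E] [InnerProductSpace ℝ E] [CompleteSpace E]

def rankOneSum (w : ℕ → E) : E →L[ℝ] E :=
  ∑' n, (innerSL ℝ (w n)).smulRight (w n)

variable {w : ℕ → E}

lemma summable_innerSL_smulRight (hw : Summable fun n => ‖w n‖ ^ 2) :
    Summable fun n => (innerSL ℝ (w n)).smulRight (w n) :=
  Summable.of_norm <| hw.congr fun n => by
    rw [ContinuousLinearMap.norm_smulRight_apply, innerSL_apply_norm, sq]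

lemma hasSum_rankOneSum_apply (hw : Summable fun n => ‖w n‖ ^ 2) (f : E) :
    HasSum (fun n => ⟪w n, f⟫ • w n) (rankOneSum w f) :=
  (summable_innerSL_smulRight hw).hasSum.mapL (ContinuousLinearMap.apply ℝ E f)

lemma hasSum_inner_rankOneSum_apply (hw : Summable fun n => ‖w n‖ ^ 2) (g f : E) :
    HasSum (fun n => ⟪g, w n⟫ * ⟪w n, f⟫) ⟪g, rankOneSum w f⟫ := by
  simpa [real_inner_smul_right, mul_comm] using
    (hasSum_rankOneSum_apply hw f).mapL (innerSL ℝ g)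

end RankOneSum

lemma isTraceClass_rankOneSum {w : ℕ → H2} (hw : Summable fun n => ‖w n‖ ^ 2) :
    IsTraceClass (rankOneSum w) :=
  ⟨w, w, hw.congr fun _ => sq _, fun f => (hasSum_rankOneSum_apply hw f).tsum_eq.symm⟩

lemma abs_sub_one_div_add_one_lt_one {p : ℝ} (hp : 0 < p) : |(p - 1) / (p + 1)| < 1 := by
  rw [abs_div, abs_of_pos (by linarith : 0 < p + 1), div_lt_one (by linarith), abs_lt]
  constructor <;> linarith

lemma hasSum_cauchy_kernel {p q : ℝ} (hp : 0 < p) (hq : 0 < q) :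
    HasSum (fun n : ℕ => 2 / ((p + 1) * (q + 1)) * ((p - 1) / (p + 1) * ((q - 1) / (q + 1))) ^ n)
      (1 / (p + q)) := by
  have hr : ‖(p - 1) / (p + 1) * ((q - 1) / (q + 1))‖ < 1 := by
    rw [Real.norm_eq_abs, abs_mul]
    exact mul_lt_one_of_nonneg_of_lt_one_left (abs_nonneg _)
      (abs_sub_one_div_add_one_lt_one hp) (abs_sub_one_div_add_one_lt_one hq).le
  have hval : 2 / ((p + 1) * (q + 1)) * (1 - (p - 1) / (p + 1) * ((q - 1) / (q + 1)))⁻¹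
      = 1 / (p + q) := by
    have : 0 < p + 1 := by linarith
    have : 0 < q + 1 := by linarith
    have : 0 < p + q := by linarith
    rw [show 1 - (p - 1) / (p + 1) * ((q - 1) / (q + 1)) = 2 * (p + q) / ((p + 1) * (q + 1)) by
      field_simp; ring]
    field_simp
  simpa [hval] using (hasSum_geometric_of_norm_lt_one hr).mul_left (2 / ((p + 1) * (q + 1)))

def cauchyFactor (κ b : ℕ → ℝ) (n j : ℕ) : ℝ :=
  √2 * b j / (κ j + 1) * ((κ j - 1) / (κ j + 1)) ^ n

section CauchyFactor

variable {κ b : ℕ → ℝ}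

lemma hasSum_cauchyFactor_mul {j l : ℕ} (hj : 0 < κ j) (hl : 0 < κ l) :
    HasSum (fun n => cauchyFactor κ b n j * cauchyFactor κ b n l) (b j * b l / (κ j + κ l)) := by
  have h := (hasSum_cauchy_kernel hj hl).mul_left (b j * b l)
  rw [mul_one_div] at h
  refine h.congr_fun fun n => ?_
  have h2 : (√2) ^ 2 = 2 := Real.sq_sqrt zero_le_two
  have := hj.le; have := hl.le
  simp only [cauchyFactor]
  field_simp
  rw [h2, mul_div_mul_comm, mul_pow]
  ring

lemma sq_cauchyFactor_le {j : ℕ} (hj : 0 < κ j) (n : ℕ) :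
    cauchyFactor κ b n j ^ 2 ≤ b j ^ 2 / κ j := by
  have h := le_hasSum (hasSum_cauchyFactor_mul (b := b) hj hj) n fun m _ => mul_self_nonneg _
  calc cauchyFactor κ b n j ^ 2 ≤ b j * b j / (κ j + κ j) := by rwa [sq]
    _ ≤ b j ^ 2 / κ j := by
      rw [← two_mul, ← sq]
      exact div_le_div_of_nonneg_left (sq_nonneg _) hj (by linarith)

lemma memℓp_cauchyFactor (hκ : ∀ j, 0 < κ j) (hb : Summable fun j => b j ^ 2 / κ j) (n : ℕ) :
    Memℓp (cauchyFactor κ b n) 2 := by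
  refine memℓp_gen (hb.of_nonneg_of_le (fun _ => by positivity) fun j => ?_)
  simpa [Real.norm_eq_abs] using sq_cauchyFactor_le (b := b) (hκ j) n

variable (hκ : ∀ j, 0 < κ j) (hb : Summable fun j => b j ^ 2 / κ j)

def cauchyVec (n : ℕ) : H2 :=
  ⟨cauchyFactor κ b n, memℓp_cauchyFactor hκ hb n⟩

lemma summable_norm_sq_cauchyVec : Summable fun n => ‖cauchyVec hκ hb n‖ ^ 2 := by
  have hdiag : Summable fun j => b j * b j / (κ j + κ j) :=
    (hb.mul_left (1 / 2)).congr fun j => by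
      have := (hκ j).ne'
      field_simp
      ring
  have hprod : Summable fun p : ℕ × ℕ => cauchyFactor κ b p.2 p.1 * cauchyFactor κ b p.2 p.1 :=
    (summable_prod_of_nonneg fun _ => mul_self_nonneg _).2
      ⟨fun j => (hasSum_cauchyFactor_mul (hκ j) (hκ j)).summable,
        hdiag.congr fun j => (hasSum_cauchyFactor_mul (hκ j) (hκ j)).tsum_eq.symm⟩
  refine hprod.prod_symm.prod.congr fun n => ?_
  rw [← real_inner_self_eq_norm_sq, lp.inner_eq_tsum]
  simp [cauchyVec, sq]

lemma inner_single_rankOneSum_cauchyVec (j l : ℕ) :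
    ⟪lp.single 2 j (1 : ℝ), rankOneSum (cauchyVec hκ hb) (lp.single 2 l 1)⟫ =
      b j * b l / (κ j + κ l) := by
  refine (hasSum_inner_rankOneSum_apply (summable_norm_sq_cauchyVec hκ hb) _ _).unique ?_
  simpa [lp.inner_single_left, lp.inner_single_right, cauchyVec, mul_comm]
    using hasSum_cauchyFactor_mul (b := b) (hκ j) (hκ l)

end CauchyFactor

def solitonAmplitude (κ c : ℕ → ℝ) (t x : ℝ) (j : ℕ) : ℝ :=
  c j * Real.exp (4 * κ j ^ 3 * t - κ j * x)

lemma solitonEntry_eq (κ c : ℕ → ℝ) (t x : ℝ) (j l : ℕ) :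
    solitonEntry κ c t x j l =
      solitonAmplitude κ c t x j * solitonAmplitude κ c t x l / (κ j + κ l) := by
  rw [solitonEntry, solitonAmplitude, solitonAmplitude, mul_mul_mul_comm, ← Real.exp_add,
    mul_div_right_comm]
  ring_nf

lemma exp_cubic_sub_linear_le {k M : ℝ} (t x : ℝ) (hk : 0 ≤ k) (hkM : k ≤ M) :
    Real.exp (4 * k ^ 3 * t - k * x) ≤ Real.exp (4 * M ^ 3 * |t| + M * |x|) := by
  have hcubic : 4 * k ^ 3 * t ≤ 4 * M ^ 3 * |t| :=
    calc 4 * k ^ 3 * t ≤ 4 * k ^ 3 * |t| := by gcongr; exact le_abs_self t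
      _ ≤ 4 * M ^ 3 * |t| := by gcongr
  have hlinear : -(k * x) ≤ M * |x| :=
    calc -(k * x) ≤ k * |x| := by rw [← mul_neg]; gcongr; exact neg_le_abs x
      _ ≤ M * |x| := by gcongr
  exact Real.exp_le_exp.2 (by linarith)

lemma summable_solitonAmplitude_sq_div {κ c : ℕ → ℝ} (hκ : ∀ j, 0 < κ j)
    (hbd : ∃ M, ∀ j, κ j ≤ M) (hsum : Summable fun j => c j ^ 2 / κ j) (t x : ℝ) :
    Summable fun j => solitonAmplitude κ c t x j ^ 2 / κ j := by
  obtain ⟨M, hM⟩ := hbd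
  refine (hsum.mul_right (Real.exp (4 * M ^ 3 * |t| + M * |x|) ^ 2)).of_nonneg_of_le
    (fun j => div_nonneg (sq_nonneg _) (hκ j).le) fun j => ?_
  rw [solitonAmplitude, mul_pow, mul_div_right_comm]
  exact mul_le_mul_of_nonneg_left
    (pow_le_pow_left₀ (Real.exp_nonneg _) (exp_cubic_sub_linear_le t x (hκ j).le (hM j)) 2)
    (div_nonneg (sq_nonneg _) (hκ j).le)

theorem statement0_general (κ c : ℕ → ℝ) (hκ : ∀ j, 0 < κ j)
    (hbd : ∃ M, ∀ j, κ j ≤ M)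
    (hsum : Summable (fun j => (c j) ^ 2 / κ j)) (t x : ℝ) :
    ∃ T : H2 →L[ℝ] H2,
      (∀ j l : ℕ, ⟪lp.single 2 j (1 : ℝ), T (lp.single 2 l (1 : ℝ))⟫ =
        solitonEntry κ c t x j l) ∧ IsTraceClass T := by
  have hb := summable_solitonAmplitude_sq_div hκ hbd hsum t x
  refine ⟨rankOneSum (cauchyVec hκ hb), fun j l => ?_,
    isTraceClass_rankOneSum (summable_norm_sq_cauchyVec hκ hb)⟩
  rw [solitonEntry_eq, inner_single_rankOneSum_cauchyVec]

theorem statement0 (κ c : ℕ → ℝ) (hκ : ∀ j, 0 < κ j)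
    (hbd : ∃ M, ∀ j, κ j ≤ M) (hc : ∀ j, 0 < c j)
    (hsum : Summable (fun j => (c j) ^ 2 / κ j)) (t x : ℝ) :
    ∃ T : H2 →L[ℝ] H2,
      (∀ j l : ℕ, ⟪lp.single 2 j (1 : ℝ), T (lp.single 2 l (1 : ℝ))⟫ =
        solitonEntry κ c t x j l) ∧ IsTraceClass T :=
  statement0_general κ c hκ hbd hsum t x

end
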